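/- arXiv:2210.16533 — 2 statements merged into one kernel-verified Lean document; each statement's English description precedes it below -/
import Mathlib

section
/- Let n ≥ 2, let W : M_n(ℝ) → ℝ be C¹, frame indifferent, and strictly rank-one convex, and let Ω ⊆ ℝⁿ be a nonempty bounded open convex set. Let A, B ∈ O(n) with B − A = a⊗ξ for some a ∈ ℝⁿ, a ≠ 0, and unit vector ξ ∈ ℝⁿ. Let h : ℝ → {0,1} be measurable such that h is not almost everywhere equal to a constant on the interval J = {⟨x, ξ⟩ : x ∈ Ω}, and let u : Ω → ℝⁿ be a Lipschitz map with Du(x) = h(⟨x,ξ⟩)·A + (1 − h(⟨x,ξ⟩))·B for almost every x ∈ Ω. Then u is not a weak solution of the Euler–Lagrange equations on Ω, i.e. it is not the case that ∫_Ω ⟨∇W(Du(x)), Dλ(x)⟩ dx = 0 for every smooth compactly supported λ : Ω → ℝⁿ. -/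
open MeasureTheory Matrix Function Set Filter Topology Metric Pointwise

attribute [local instance] Matrix.normedAddCommGroup Matrix.normedSpace

set_option maxHeartbeats 4000000

noncomputable section


abbrev Mat (n : ℕ) : Type := Matrix (Fin n) (Fin n) ℝ

/-- Frobenius inner product `⟨A, B⟩ = tr(Aᵀ B)`. -/
def frob {n : ℕ} (A B : Mat n) : ℝ := (Aᵀ * B).trace

/-- The orthogonal group `O(n)` as a subset of the `n × n` matrices. -/
def On (n : ℕ) : Set (Mat n) := {R : Mat n | Rᵀ * R = 1}

/-- A matrix regarded as a continuous linear map `ℝⁿ → ℝⁿ`. -/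
noncomputable def matCLM {n : ℕ} (D : Mat n) : (Fin n → ℝ) →L[ℝ] (Fin n → ℝ) :=
  LinearMap.toContinuousLinearMap D.mulVecLin

/-- The Jacobian matrix of `f` at `x`. -/
noncomputable def jac {n : ℕ} (f : (Fin n → ℝ) → (Fin n → ℝ)) (x : Fin n → ℝ) : Mat n :=
  Matrix.of fun i j => fderiv ℝ f x (Pi.single j 1) i

/-- Smooth compactly supported test vector fields supported in `Ω`. -/
def IsTestFun {n : ℕ} (Ω : Set (Fin n → ℝ)) (lam : (Fin n → ℝ) → (Fin n → ℝ)) : Prop :=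
  ContDiff ℝ (⊤ : ℕ∞) lam ∧ HasCompactSupport lam ∧ tsupport lam ⊆ Ω

/-- The energy-momentum tensor `T(X) = Xᵀ ∇W(X) − W(X) I`. -/
noncomputable def EMT {n : ℕ} (W : Mat n → ℝ) (gradW : Mat n → Mat n) (X : Mat n) : Mat n :=
  Xᵀ * gradW X - W X • (1 : Mat n)



lemma dot_cont {n : ℕ} (ξ : Fin n → ℝ) : Continuous fun x : Fin n → ℝ => x ⬝ᵥ ξ := by
  unfold dotProduct
  exact continuous_finset_sum _ fun i _ => (continuous_apply i).mul continuous_const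

lemma intg {n : ℕ} {H : ℝ → ℝ} (hH : Measurable H) {C : ℝ} (hC : ∀ t, |H t| ≤ C)
    (ξ : Fin n → ℝ) {ψ : (Fin n → ℝ) → ℝ} (hc : Continuous ψ) (hs : HasCompactSupport ψ) :
    Integrable (fun x => H (x ⬝ᵥ ξ) * ψ x) := by
  refine (hc.integrable_of_hasCompactSupport hs).bdd_mul ?_ (ae_of_all _ fun x => hC _)
  exact ((hH.comp (dot_cont ξ).measurable).aestronglyMeasurable)

lemma intg1 {H : ℝ → ℝ} (hH : Measurable H) {C : ℝ} (hC : ∀ t, |H t| ≤ C)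
    {ψ : ℝ → ℝ} (hc : Continuous ψ) (hs : HasCompactSupport ψ) :
    Integrable (fun t => H t * ψ t) :=
  (hc.integrable_of_hasCompactSupport hs).bdd_mul hH.aestronglyMeasurable (ae_of_all _ fun x => hC _)

/-- Translation trick: if `H ∘ (⬝ᵥ ξ)` is invariant under translations in direction `w`,
then `∫ H(x⬝ξ) ∂_w ψ = 0` for smooth compactly supported `ψ`. -/
lemma lemT {n : ℕ} (ξ w : Fin n → ℝ) {H : ℝ → ℝ} (hH : Measurable H) {C : ℝ}
    (hC : ∀ t, |H t| ≤ C) {ψ : (Fin n → ℝ) → ℝ} (hψ : ContDiff ℝ (⊤ : ℕ∞) ψ)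
    (hsupp : HasCompactSupport ψ)
    (hinv : ∀ s : ℝ, ∀ x, H ((x + s • w) ⬝ᵥ ξ) = H (x ⬝ᵥ ξ)) :
    ∫ x, H (x ⬝ᵥ ξ) * fderiv ℝ ψ x w = 0 := by
  have hψc : Continuous ψ := hψ.continuous
  have hψd : Differentiable ℝ ψ := hψ.differentiable (by simp)
  have hfc : Continuous (fderiv ℝ ψ) := hψ.continuous_fderiv (by simp)
  -- bound on the derivative
  obtain ⟨x₀, hx₀⟩ := (hfc.norm).exists_forall_ge_of_hasCompactSupport (hsupp.fderiv ℝ).norm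
  set M : ℝ := ‖fderiv ℝ ψ x₀‖ with hM
  have hMnn : 0 ≤ M := norm_nonneg _
  have hlip : ∀ x y : Fin n → ℝ, |ψ y - ψ x| ≤ M * ‖y - x‖ := by
    intro x y
    exact Convex.norm_image_sub_le_of_norm_fderiv_le (fun z _ => hψd z)
      (fun z _ => hx₀ z) convex_univ (mem_univ x) (mem_univ y)
  -- the translated integrals are all equal
  have hFconst : ∀ s : ℝ, ∫ x, H (x ⬝ᵥ ξ) * ψ (x + s • w) = ∫ x, H (x ⬝ᵥ ξ) * ψ x := by
    intro s
    have h1 : ∫ x, H ((x + (-s) • w) ⬝ᵥ ξ) * ψ x = ∫ x, H (x ⬝ᵥ ξ) * ψ x := by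
      congr 1; funext x; rw [hinv]
    calc ∫ x, H (x ⬝ᵥ ξ) * ψ (x + s • w)
        = ∫ x, (fun y => H ((y + (-s) • w) ⬝ᵥ ξ) * ψ y) (x + s • w) := by
          congr 1; funext x; simp [add_assoc, ← add_smul]
      _ = ∫ y, H ((y + (-s) • w) ⬝ᵥ ξ) * ψ y :=
          integral_add_right_eq_self (fun y => H ((y + (-s) • w) ⬝ᵥ ξ) * ψ y) (s • w)
      _ = ∫ x, H (x ⬝ᵥ ξ) * ψ x := h1
  -- compact set outside which nothing happens
  set K : Set (Fin n → ℝ) := tsupport ψ + Metric.closedBall (0 : Fin n → ℝ) ‖w‖ with hK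
  have hKcomp : IsCompact K := IsCompact.add hsupp (isCompact_closedBall (0 : Fin n → ℝ) ‖w‖)
  have hKout : ∀ x, x ∉ K → ∀ s : ℝ, |s| ≤ 1 → ψ (x + s • w) = 0 := by
    intro x hx s hs
    by_contra hne
    apply hx
    refine ⟨x + s • w, subset_tsupport ψ hne, -(s • w), ?_, by module⟩
    simp only [mem_closedBall, dist_zero_right, norm_neg, norm_smul, Real.norm_eq_abs]
    calc |s| * ‖w‖ ≤ 1 * ‖w‖ := by gcongr
      _ = ‖w‖ := one_mul _
  have hKout0 : ∀ x, x ∉ K → ψ x = 0 := by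
    intro x hx
    have := hKout x hx 0 (by norm_num)
    simpa using this
  have hC0 : 0 ≤ C := le_trans (abs_nonneg _) (hC 0)
  -- integrability of translated products
  have hint : ∀ s : ℝ, Integrable (fun x => H (x ⬝ᵥ ξ) * ψ (x + s • w)) := by
    intro s
    refine intg hH hC ξ (hψc.comp (continuous_id.add continuous_const)) ?_
    exact hsupp.comp_homeomorph (Homeomorph.addRight (s • w))
  -- the difference quotient integrals vanish
  set F : ℝ → (Fin n → ℝ) → ℝ :=
    fun s x => H (x ⬝ᵥ ξ) * (s⁻¹ * (ψ (x + s • w) - ψ x)) with hF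
  have hzero : ∀ s : ℝ, s ≠ 0 → ∫ x, F s x = 0 := by
    intro s hs
    have : (fun x => F s x)
        = fun x => s⁻¹ * (H (x ⬝ᵥ ξ) * ψ (x + s • w) - H (x ⬝ᵥ ξ) * ψ x) := by
      funext x; ring
    rw [this, integral_const_mul, integral_sub (hint s) (by simpa using hint 0),
      hFconst s, sub_self, mul_zero]
  -- dominated convergence
  have hmain : Tendsto (fun s => ∫ x, F s x) (𝓝[≠] (0:ℝ))
      (𝓝 (∫ x, H (x ⬝ᵥ ξ) * fderiv ℝ ψ x w)) := by
    apply tendsto_integral_filter_of_dominated_convergence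
      (K.indicator fun _ => C * (M * ‖w‖))
    · filter_upwards with s
      exact ((hH.comp (dot_cont ξ).measurable).aestronglyMeasurable.mul
        ((continuous_const.mul ((hψc.comp (continuous_id.add continuous_const)).sub hψc)).aestronglyMeasurable))
    · have h1 : ∀ᶠ s in 𝓝[≠] (0:ℝ), |s| ≤ 1 := by
        apply eventually_nhdsWithin_of_eventually_nhds
        have : ∀ᶠ s in 𝓝 (0:ℝ), dist s 0 ≤ 1 := Metric.eventually_nhds_iff.2 ⟨1, by norm_num,
          fun {y} hy => le_of_lt (by simpa using hy)⟩
        simpa [Real.dist_eq] using this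
      have h2 : ∀ᶠ s in 𝓝[≠] (0:ℝ), s ≠ 0 := by
        exact (self_mem_nhdsWithin : {(0:ℝ)}ᶜ ∈ 𝓝[≠] (0:ℝ))
      filter_upwards [h1, h2] with s hs1 hs2
      filter_upwards with x
      by_cases hx : x ∈ K
      · have hq : |s⁻¹ * (ψ (x + s • w) - ψ x)| ≤ M * ‖w‖ := by
          have hle : |ψ (x + s • w) - ψ x| ≤ M * (|s| * ‖w‖) := by
            have := hlip x (x + s • w)
            simpa [norm_smul, Real.norm_eq_abs] using this
          rw [abs_mul, abs_inv]
          rcases eq_or_lt_of_le (abs_nonneg s) with hs0 | hs0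
          · exact absurd (abs_eq_zero.mp hs0.symm) hs2
          · rw [inv_mul_le_iff₀ hs0]
            calc |ψ (x + s • w) - ψ x| ≤ M * (|s| * ‖w‖) := hle
              _ = |s| * (M * ‖w‖) := by ring
        rw [indicator_of_mem hx]
        show ‖H (x ⬝ᵥ ξ) * (s⁻¹ * (ψ (x + s • w) - ψ x))‖ ≤ C * (M * ‖w‖)
        rw [Real.norm_eq_abs, abs_mul]
        exact mul_le_mul (hC _) hq (abs_nonneg _) hC0
      · rw [indicator_of_notMem hx]
        have h1' := hKout x hx s hs1
        have h0 := hKout0 x hx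
        show ‖H (x ⬝ᵥ ξ) * (s⁻¹ * (ψ (x + s • w) - ψ x))‖ ≤ 0
        rw [h1', h0]
        simp
    · rw [integrable_indicator_iff hKcomp.measurableSet]
      exact integrableOn_const hKcomp.measure_lt_top.ne
    · filter_upwards with x
      have h1 : HasDerivAt (fun s : ℝ => x + s • w) w 0 := by
        simpa using ((hasDerivAt_id (0:ℝ)).smul_const w).const_add x
      have hd : HasDerivAt (fun s : ℝ => ψ (x + s • w)) (fderiv ℝ ψ x w) 0 := by
        have := ((hψd (x + (0:ℝ) • w)).hasFDerivAt.comp_hasDerivAt 0 h1)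
        simp only [zero_smul, add_zero] at this
        exact this
      rw [hasDerivAt_iff_tendsto_slope] at hd
      have : (fun s => F s x) = fun s => H (x ⬝ᵥ ξ) * slope (fun s : ℝ => ψ (x + s • w)) 0 s := by
        funext s
        simp [hF, slope_def_field, div_eq_inv_mul]
      rw [this]
      exact hd.const_mul _
  have hzt : Tendsto (fun s => ∫ x, F s x) (𝓝[≠] (0:ℝ)) (𝓝 0) := by
    refine Tendsto.congr' ?_ tendsto_const_nhds
    filter_upwards [self_mem_nhdsWithin] with s hs
    exact (hzero s hs).symm
  exact (tendsto_nhds_unique hmain hzt)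


/-- An involutive, dot-product preserving linear equivalence sending `ξ` to `Pi.single 0 1`. -/
lemma exists_R {m : ℕ} (ξ : Fin (m+1) → ℝ) (hξ : ξ ⬝ᵥ ξ = 1) :
    ∃ R : (Fin (m+1) → ℝ) ≃ₗ[ℝ] (Fin (m+1) → ℝ),
      (∀ z, R (R z) = z) ∧ R ξ = Pi.single 0 1 ∧
      (∀ z z', R z ⬝ᵥ R z' = z ⬝ᵥ z') := by
  let E := EuclideanSpace ℝ (Fin (m+1))
  let eqv : E ≃ₗ[ℝ] (Fin (m+1) → ℝ) := WithLp.linearEquiv 2 ℝ (Fin (m+1) → ℝ)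
  have hinner : ∀ u v : E, (inner ℝ u v : ℝ) = eqv u ⬝ᵥ eqv v := by
    intro u v
    rw [PiLp.inner_apply]
    simp [eqv, dotProduct, mul_comm]
    rfl
  have hnorm : ∀ u : E, ‖u‖ ^ 2 = eqv u ⬝ᵥ eqv u := by
    intro u
    rw [← real_inner_self_eq_norm_sq]
    exact hinner u u
  have hξ'n : ‖eqv.symm ξ‖ = 1 := by
    have h2 : ‖eqv.symm ξ‖ ^ 2 = 1 := by
      rw [hnorm, LinearEquiv.apply_symm_apply]; exact hξ
    nlinarith [norm_nonneg (eqv.symm ξ)]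
  have he'n : ‖eqv.symm (Pi.single (0 : Fin (m+1)) (1:ℝ))‖ = 1 := by
    have h2 : ‖eqv.symm (Pi.single (0 : Fin (m+1)) (1:ℝ))‖ ^ 2 = 1 := by
      rw [hnorm, LinearEquiv.apply_symm_apply]
      simp [dotProduct, Pi.single_apply]
    nlinarith [norm_nonneg (eqv.symm (Pi.single (0 : Fin (m+1)) (1:ℝ)))]
  let Riso : E ≃ₗᵢ[ℝ] E :=
    Submodule.reflection (Submodule.span ℝ {eqv.symm ξ - eqv.symm (Pi.single (0 : Fin (m+1)) (1:ℝ))})ᗮ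
  have hswap : Riso (eqv.symm ξ) = eqv.symm (Pi.single (0 : Fin (m+1)) (1:ℝ)) :=
    Submodule.reflection_sub (by rw [hξ'n, he'n])
  refine ⟨(eqv.symm.trans Riso.toLinearEquiv).trans eqv, ?_, ?_, ?_⟩
  · intro z
    simp only [LinearEquiv.trans_apply, LinearEquiv.symm_apply_apply,
      LinearIsometryEquiv.coe_toLinearEquiv]
    rw [Submodule.reflection_reflection]
    simp
  · simp only [LinearEquiv.trans_apply, LinearIsometryEquiv.coe_toLinearEquiv]
    rw [hswap, LinearEquiv.apply_symm_apply]
  · intro z z'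
    simp only [LinearEquiv.trans_apply, LinearIsometryEquiv.coe_toLinearEquiv]
    rw [← hinner, LinearIsometryEquiv.inner_map_map, hinner]
    simp

/-- Change of variables by a volume-preserving affine map. -/
lemma integral_comp_affine {n : ℕ} (c₀ : Fin n → ℝ)
    (L : (Fin n → ℝ) ≃ₗ[ℝ] (Fin n → ℝ))
    (hdet : |LinearMap.det (L : (Fin n → ℝ) →ₗ[ℝ] (Fin n → ℝ))| = 1)
    (G : (Fin n → ℝ) → ℝ) : ∫ y, G (c₀ + L y) = ∫ x, G x := by
  have hdne : LinearMap.det (L : (Fin n → ℝ) →ₗ[ℝ] (Fin n → ℝ)) ≠ 0 := by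
    intro h0; rw [h0] at hdet; simp at hdet
  have hmap : Measure.map (⇑L) (volume : Measure (Fin n → ℝ)) = volume := by
    have := Real.map_linearMap_volume_pi_eq_smul_volume_pi hdne
    rw [show ⇑(L : (Fin n → ℝ) →ₗ[ℝ] (Fin n → ℝ)) = ⇑L from rfl] at this
    rw [this, abs_inv, hdet]
    simp
  let Lc : (Fin n → ℝ) ≃L[ℝ] (Fin n → ℝ) := L.toContinuousLinearEquiv
  have hLc : ⇑Lc = ⇑L := rfl
  have hmpL : MeasurePreserving (⇑L) volume volume := ⟨(Lc.continuous).measurable, hmap⟩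
  have hmpT : MeasurePreserving (fun y => c₀ + L y) volume volume :=
    (measurePreserving_add_left volume c₀).comp hmpL
  have hemb : MeasurableEmbedding (fun y : Fin n → ℝ => c₀ + L y) := by
    have : (fun y : Fin n → ℝ => c₀ + L y)
        = (Homeomorph.addLeft c₀) ∘ Lc.toHomeomorph := rfl
    rw [this]
    exact (Lc.toHomeomorph.trans (Homeomorph.addLeft c₀)).measurableEmbedding
  exact hmpT.integral_comp hemb G

/-- Fubini-type factorization for the first coordinate. -/
lemma fub {m : ℕ} (F : ℝ → ℝ) (η : (Fin m → ℝ) → ℝ) :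
    ∫ y : Fin (m+1) → ℝ, F (y 0) * η (fun i => y i.succ)
      = (∫ t, F t) * ∫ z, η z := by
  let e := MeasurableEquiv.piFinSuccAbove (fun _ : Fin (m+1) => ℝ) 0
  have hmp : MeasurePreserving (⇑e.symm) volume volume :=
    (MeasureTheory.volume_preserving_piFinSuccAbove (fun _ : Fin (m+1) => ℝ) 0).symm e
  have h1 : ∫ y : Fin (m+1) → ℝ, F (y 0) * η (fun i => y i.succ)
      = ∫ z : ℝ × (Fin m → ℝ), F ((e.symm z) 0) * η (fun i => (e.symm z) i.succ) :=
    (hmp.integral_comp e.symm.measurableEmbedding _).symm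
  have h2 : ∀ z : ℝ × (Fin m → ℝ),
      F ((e.symm z) 0) * η (fun i => (e.symm z) i.succ) = F z.1 * η z.2 := by
    intro z
    have hes : e.symm z = Fin.insertNth 0 z.1 z.2 := rfl
    have hz0 : (e.symm z) 0 = z.1 := by rw [hes]; simp
    have hzs : (fun i => (e.symm z) i.succ) = z.2 := by
      funext i
      rw [hes]
      have : (0:Fin (m+1)).succAbove i = i.succ := by simp [Fin.succAbove_zero]
      rw [← this, Fin.insertNth_apply_succAbove]
    rw [hz0, hzs]
  rw [h1]
  simp_rw [h2]
  rw [Measure.volume_eq_prod]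
  exact integral_prod_mul F η


/-- du Bois-Reymond on an interval. -/
lemma dbr {α β : ℝ} (hαβ : α < β) {h : ℝ → ℝ} (hmeas : Measurable h)
    (hbd : ∀ t, |h t| ≤ 1)
    (hstar : ∀ g : ℝ → ℝ, ContDiff ℝ (⊤:ℕ∞) g → HasCompactSupport g →
      tsupport g ⊆ Ioo α β → ∫ t, h t * deriv g t = 0) :
    ∃ c : ℝ, ∀ᵐ t ∂(volume.restrict (Ioo α β)), h t = c := by
  have hb3 : (0:ℝ) < (β - α)/3 := by linarith
  let bump : ContDiffBump ((α+β)/2) := ⟨(β-α)/4, (β-α)/3, by linarith, by linarith⟩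
  set g₀ : ℝ → ℝ := bump.normed volume with hg₀
  have hg₀c : Continuous g₀ := bump.continuous_normed
  have hg₀s : HasCompactSupport g₀ := bump.hasCompactSupport_normed
  have hg₀i : ∫ t, g₀ t = 1 := bump.integral_normed
  have hg₀sup : tsupport g₀ ⊆ Ioo α β := by
    rw [hg₀, bump.tsupport_normed_eq, Real.closedBall_eq_Icc]
    intro t ht
    rw [mem_Icc] at ht
    exact mem_Ioo.mpr ⟨by linarith [ht.1, show bump.rOut = (β-α)/3 from rfl], by linarith [ht.2, show bump.rOut = (β-α)/3 from rfl]⟩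
  have hg₀int : Integrable g₀ := hg₀c.integrable_of_hasCompactSupport hg₀s
  set c : ℝ := ∫ t, h t * g₀ t with hc
  -- key step
  have key : ∀ ψ : ℝ → ℝ, ContDiff ℝ (⊤:ℕ∞) ψ → HasCompactSupport ψ →
      tsupport ψ ⊆ Ioo α β → ∫ t, ψ t * (h t - c) = 0 := by
    intro ψ hψ hψs hψsup
    have hψc : Continuous ψ := hψ.continuous
    have hψint : Integrable ψ := hψc.integrable_of_hasCompactSupport hψs
    set I : ℝ := ∫ t, ψ t with hI
    set q : ℝ → ℝ := fun s => ψ s - I * g₀ s with hq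
    have hqc : Continuous q := hψc.sub (continuous_const.mul hg₀c)
    set Kq : Set ℝ := tsupport ψ ∪ tsupport g₀ with hKq
    have hKqcomp : IsCompact Kq := hψs.union hg₀s
    have hKqne : Kq.Nonempty := by
      refine ⟨(α+β)/2, Or.inr ?_⟩
      rw [bump.tsupport_normed_eq]
      exact mem_closedBall_self (by linarith [show bump.rOut = (β-α)/3 from rfl])
    have hKqS : Kq ⊆ Ioo α β := union_subset hψsup hg₀sup
    have hqsupp : support q ⊆ Kq := by
      intro s hs
      by_contra hns
      have h1 : ψ s = 0 := image_eq_zero_of_notMem_tsupport fun hh => hns (Or.inl hh)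
      have h2 : g₀ s = 0 := image_eq_zero_of_notMem_tsupport fun hh => hns (Or.inr hh)
      exact hs (by simp [hq, h1, h2])
    set γ₁ : ℝ := sInf Kq with hγ₁
    set γ₂ : ℝ := sSup Kq with hγ₂
    have hγ₁mem : γ₁ ∈ Ioo α β := hKqS (hKqcomp.sInf_mem hKqne)
    have hγ₂mem : γ₂ ∈ Ioo α β := hKqS (hKqcomp.sSup_mem hKqne)
    set a₀ : ℝ := α - 1 with ha₀
    set g : ℝ → ℝ := fun t => ∫ s in a₀..t, q s with hg
    have hgd : ∀ t, HasDerivAt g (q t) t := by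
      intro t
      exact intervalIntegral.integral_hasDerivAt_right (hqc.intervalIntegrable _ _)
        (hqc.stronglyMeasurableAtFilter _ _) hqc.continuousAt
    have hgdiff : Differentiable ℝ g := fun t => (hgd t).differentiableAt
    have hderiv : deriv g = q := funext fun t => (hgd t).deriv
    have hgsm : ContDiff ℝ (⊤:ℕ∞) g := by
      rw [contDiff_infty_iff_deriv]
      exact ⟨hgdiff, by rw [hderiv]; exact hψ.sub (contDiff_const.mul bump.contDiff_normed)⟩
    have hgsupp : support g ⊆ Icc γ₁ γ₂ := by
      intro t ht
      by_contra hnt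
      apply ht
      rw [mem_Icc] at hnt
      push_neg at hnt
      rcases lt_or_ge t γ₁ with h1 | h1'
      · -- t < γ₁ : integrand vanishes on the interval
        show (∫ s in a₀..t, q s) = 0
        rw [intervalIntegral.integral_congr (g := fun _ => (0:ℝ)) ?_,
          intervalIntegral.integral_zero]
        intro s hs
        rw [uIcc_eq_union] at hs
        have hsl : s < γ₁ := by
          rcases hs with hs | hs
          · rcases mem_Icc.mp hs with ⟨_, h⟩; exact lt_of_le_of_lt h h1
          · rcases mem_Icc.mp hs with ⟨_, h⟩
            have : a₀ < γ₁ := by rw [ha₀]; linarith [hγ₁mem.1]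
            exact lt_of_le_of_lt h this
        have : s ∉ Kq := notMem_of_lt_csInf hsl hKqcomp.bddBelow
        exact by_contra fun hne => this (hqsupp hne)
      · -- t > γ₂ : integral is total integral which is zero
        have h2 : γ₂ < t := hnt h1'
        show (∫ s in a₀..t, q s) = 0
        rw [intervalIntegral.integral_eq_integral_of_support_subset
          (fun s hs => ?_)]
        · rw [hq]
          rw [integral_sub hψint (hg₀int.const_mul I), integral_const_mul, hg₀i]
          simp [hI]
        · have h1 := hqsupp hs
          have hle1 : γ₁ ≤ s := csInf_le hKqcomp.bddBelow h1
          have hle2 : s ≤ γ₂ := le_csSup hKqcomp.bddAbove h1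
          constructor
          · rw [ha₀]; linarith [hγ₁mem.1]
          · linarith [h2]
    have hgsupcl : tsupport g ⊆ Ioo α β := by
      have h1 : tsupport g ⊆ Icc γ₁ γ₂ := closure_minimal hgsupp isClosed_Icc
      intro t ht
      rcases mem_Icc.mp (h1 ht) with ⟨l1, l2⟩
      exact ⟨lt_of_lt_of_le hγ₁mem.1 l1, lt_of_le_of_lt l2 hγ₂mem.2⟩
    have hgcs : HasCompactSupport g :=
      IsCompact.of_isClosed_subset isCompact_Icc (isClosed_tsupport g)
        (closure_minimal hgsupp isClosed_Icc)
    have h0 := hstar g hgsm hgcs hgsupcl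
    rw [hderiv] at h0
    -- ∫ h q = ∫ h ψ - I * c = 0
    have hsplit : ∫ t, h t * q t = (∫ t, h t * ψ t) - I * c := by
      have heq : (fun t => h t * q t) = fun t => h t * ψ t - I * (h t * g₀ t) := by
        funext t; rw [hq]; ring
      rw [heq, integral_sub (intg1 hmeas hbd hψc hψs)
        ((intg1 hmeas hbd hg₀c hg₀s).const_mul I), integral_const_mul]
    rw [hsplit] at h0
    have hψh : ∫ t, h t * ψ t = I * c := by linarith
    have heq2 : (fun t => ψ t * (h t - c)) = fun t => h t * ψ t - c * ψ t := by
      funext t; ring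
    rw [heq2, integral_sub (intg1 hmeas hbd hψc hψs) (hψint.const_mul c),
      integral_const_mul, hψh, hI]
    ring
  -- apply the distribution-theoretic lemma
  have hloc : LocallyIntegrableOn (fun t => h t - c) (Ioo α β) volume := by
    apply LocallyIntegrable.locallyIntegrableOn
    rw [locallyIntegrable_iff]
    intro K hK
    apply Measure.integrableOn_of_bounded (M := 1 + |c|) hK.measure_lt_top.ne
    · exact (hmeas.sub measurable_const).aestronglyMeasurable
    · filter_upwards with t
      calc ‖h t - c‖ ≤ |h t| + |c| := abs_sub _ _
        _ ≤ 1 + |c| := by linarith [hbd t]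
  have hae := (isOpen_Ioo (a := α) (b := β)).ae_eq_zero_of_integral_contDiff_smul_eq_zero
    hloc (f := fun t => h t - c) (fun g hg hgs hgsup => by
      have := key g (by exact_mod_cast hg) hgs hgsup
      simpa [smul_eq_mul] using this)
  refine ⟨c, (ae_restrict_iff' measurableSet_Ioo).2 ?_⟩
  filter_upwards [hae] with t ht hmem
  have := ht hmem
  linarith


lemma frob_eq {n : ℕ} (A B : Mat n) : frob A B = ∑ j, ∑ i, A i j * B i j := by
  simp [frob, Matrix.trace, Matrix.diag, Matrix.mul_apply]

lemma frob_add_left {n : ℕ} (A B C : Mat n) : frob (A + B) C = frob A C + frob B C := by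
  simp [frob_eq, Matrix.add_apply, add_mul, Finset.sum_add_distrib]

lemma frob_smul_left {n : ℕ} (c : ℝ) (A C : Mat n) : frob (c • A) C = c * frob A C := by
  simp [frob_eq, Matrix.smul_apply, smul_eq_mul, Finset.mul_sum, mul_assoc]

lemma frob_sub_left {n : ℕ} (A B C : Mat n) : frob (A - B) C = frob A C - frob B C := by
  simp [frob_eq, Matrix.sub_apply, sub_mul, Finset.sum_sub_distrib]

lemma clm_apply_eq_sum {n : ℕ} (L : (Fin n → ℝ) →L[ℝ] ℝ) (v : Fin n → ℝ) :
    L v = ∑ j, v j * L (Pi.single j 1) := by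
  conv_lhs => rw [← Finset.univ_sum_single v]
  rw [map_sum]
  congr 1
  funext j
  have : Pi.single j (v j) = v j • (Pi.single j (1:ℝ) : Fin n → ℝ) := by
    rw [← Pi.single_smul, smul_eq_mul, mul_one]
  rw [this, L.map_smul, smul_eq_mul]

lemma frob_jac {n : ℕ} (M : Mat n) (a : Fin n → ℝ) (φ : (Fin n → ℝ) → ℝ)
    (x : Fin n → ℝ) (hφ : DifferentiableAt ℝ φ x) :
    frob M (jac (fun y => φ y • a) x) = fderiv ℝ φ x (Matrix.vecMul a M) := by
  have hfd : fderiv ℝ (fun y => φ y • a) x = (fderiv ℝ φ x).smulRight a :=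
    (hφ.hasFDerivAt.smul_const a).fderiv
  have hjac : ∀ i j, jac (fun y => φ y • a) x i j = fderiv ℝ φ x (Pi.single j 1) * a i := by
    intro i j
    show (fderiv ℝ (fun y => φ y • a) x (Pi.single j 1)) i = _
    rw [hfd]
    simp [ContinuousLinearMap.smulRight_apply, smul_eq_mul, mul_comm]
  rw [frob_eq, clm_apply_eq_sum (fderiv ℝ φ x) (Matrix.vecMul a M)]
  congr 1
  funext j
  rw [Matrix.vecMul, dotProduct]
  rw [Finset.sum_mul]
  congr 1
  funext i
  rw [hjac i j]
  ring

/-- if in addition `W` is strictly rank-one convex, a nontrivial laminate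
between two rank-one connected orthogonal matrices is never a weak solution of the
Euler–Lagrange equations. -/

theorem stmt_8 (n : ℕ) (hn : 2 ≤ n) (W : Mat n → ℝ) (hW : ContDiff ℝ 1 W)
    (gradW : Mat n → Mat n)
    (hgrad : ∀ X H : Mat n, HasDerivAt (fun t : ℝ => W (X + t • H)) (frob (gradW X) H) 0)
    (hFI : ∀ R ∈ On n, ∀ X : Mat n, W (R * X) = W X)
    (hSRC : ∀ (A : Mat n) (a b : Fin n → ℝ), a ≠ 0 → b ≠ 0 →
      StrictConvexOn ℝ (Set.univ : Set ℝ) (fun t : ℝ => W (A + t • Matrix.vecMulVec a b)))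
    (Ω : Set (Fin n → ℝ)) (hne : Ω.Nonempty) (hop : IsOpen Ω)
    (hbd : Bornology.IsBounded Ω) (hconv : Convex ℝ Ω)
    (A B : Mat n) (hA : A ∈ On n) (hB : B ∈ On n)
    (a ξ : Fin n → ℝ) (ha : a ≠ 0) (hξ : ξ ⬝ᵥ ξ = 1)
    (hAB : B - A = Matrix.vecMulVec a ξ)
    (h : ℝ → ℝ) (hmeas : Measurable h) (hrange : ∀ t : ℝ, h t = 0 ∨ h t = 1)
    (hnc : ¬ ∃ c : ℝ, ∀ᵐ t ∂(volume.restrict ((fun x : Fin n → ℝ => x ⬝ᵥ ξ) '' Ω)), h t = c)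
    (u : (Fin n → ℝ) → (Fin n → ℝ)) (K : NNReal) (huLip : LipschitzOnWith K u Ω)
    (hDu : ∀ᵐ x ∂volume, x ∈ Ω →
      HasFDerivAt u (matCLM (h (x ⬝ᵥ ξ) • A + (1 - h (x ⬝ᵥ ξ)) • B)) x) :
    ¬ (∀ lam, IsTestFun Ω lam →
        ∫ x in Ω, frob (gradW (h (x ⬝ᵥ ξ) • A + (1 - h (x ⬝ᵥ ξ)) • B)) (jac lam x) = 0) := by
  intro HEL
  obtain ⟨m, rfl⟩ : ∃ m, n = m + 1 := ⟨n - 1, by omega⟩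
  have hb1 : ∀ t, |h t| ≤ 1 := by
    intro t; rcases hrange t with h0 | h0 <;> simp [h0]
  have hξne : ξ ≠ 0 := by
    intro h0; rw [h0] at hξ; simp at hξ
  -- the direction functional as a linear map
  set ℓlin : (Fin (m+1) → ℝ) →ₗ[ℝ] ℝ :=
    { toFun := fun x => x ⬝ᵥ ξ
      map_add' := fun x y => add_dotProduct x y ξ
      map_smul' := fun c x => smul_dotProduct c x ξ } with hℓlin
  set ℓCLM : (Fin (m+1) → ℝ) →L[ℝ] ℝ := LinearMap.toContinuousLinearMap ℓlin with hℓCLM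
  have hℓ : ∀ x, ℓCLM x = x ⬝ᵥ ξ := fun x => rfl
  -- strict rank-one convexity gives κ < 0
  set Hm : Mat (m+1) := Matrix.vecMulVec a ξ with hHm
  set N : Mat (m+1) := gradW A - gradW B with hN
  set κ : ℝ := frob N Hm with hκdef
  have hκ : κ < 0 := by
    have hconvf := hSRC B a ξ ha hξne
    rw [← hHm] at hconvf
    have hfd : ∀ t₀ : ℝ, HasDerivAt (fun t : ℝ => W (B + t • Hm))
        (frob (gradW (B + t₀ • Hm)) Hm) t₀ := by
      intro t₀
      have h0 := hgrad (B + t₀ • Hm) Hm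
      have h0' : HasDerivAt (fun t => W (B + t₀ • Hm + t • Hm))
          (frob (gradW (B + t₀ • Hm)) Hm) (t₀ - t₀) := by simpa using h0
      have h1 := h0'.comp_sub_const t₀ t₀
      have hfun : (fun t : ℝ => W (B + t₀ • Hm + (t - t₀) • Hm))
          = fun t : ℝ => W (B + t • Hm) := by
        funext t
        congr 1
        module
      rwa [hfun] at h1
    have hA' : B + (-1 : ℝ) • Hm = A := by
      have hHm' : Hm = B - A := hAB.symm
      rw [hHm']; module
    have h1 := hconvf.lt_slope_of_hasDerivAt (mem_univ (-1:ℝ)) (mem_univ (0:ℝ))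
      (by norm_num) (hfd (-1))
    have h2 := hconvf.slope_lt_of_hasDerivAt (mem_univ (-1:ℝ)) (mem_univ (0:ℝ))
      (by norm_num) (hfd 0)
    have h3 : frob (gradW (B + (-1:ℝ) • Hm)) Hm < frob (gradW (B + (0:ℝ) • Hm)) Hm :=
      lt_trans h1 h2
    rw [hA'] at h3
    simp only [zero_smul, add_zero] at h3
    rw [hκdef, hN, frob_sub_left]
    linarith
  set vN : Fin (m+1) → ℝ := Matrix.vecMul a N with hvN
  have hvNξ : vN ⬝ᵥ ξ = κ := by
    rw [hκdef, frob_eq]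
    simp only [hvN, hHm, dotProduct, Matrix.vecMul, Matrix.vecMulVec_apply,
      Finset.sum_mul]
    apply Finset.sum_congr rfl
    intro j _
    apply Finset.sum_congr rfl
    intro i _
    ring
  -- continuity and compact support of directional derivatives
  have hfdK : ∀ (φ : (Fin (m+1) → ℝ) → ℝ), ContDiff ℝ (⊤:ℕ∞) φ → HasCompactSupport φ →
      ∀ w, Continuous (fun x => fderiv ℝ φ x w) ∧
        HasCompactSupport (fun x => fderiv ℝ φ x w) := by
    intro φ hφ hφs w
    refine ⟨(hφ.continuous_fderiv (by simp)).clm_apply continuous_const, ?_⟩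
    apply IsCompact.of_isClosed_subset hφs (isClosed_tsupport _)
    apply closure_minimal ?_ (isClosed_tsupport φ)
    intro x hx
    rw [mem_support] at hx
    have hne' : fderiv ℝ φ x ≠ 0 := by
      intro h0; rw [h0] at hx; simp at hx
    exact support_fderiv_subset ℝ (mem_support.mpr hne')
  -- STEP A : weak EL implies ∫ h(x⬝ξ) ∂_ξ φ = 0 for every test function on Ω
  have hI0 : ∀ φ : (Fin (m+1) → ℝ) → ℝ, ContDiff ℝ (⊤:ℕ∞) φ → HasCompactSupport φ →
      tsupport φ ⊆ Ω → ∫ x, h (x ⬝ᵥ ξ) * fderiv ℝ φ x ξ = 0 := by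
    intro φ hφ hφs hφsup
    have hφd : Differentiable ℝ φ := hφ.differentiable (by simp)
    set lam : (Fin (m+1) → ℝ) → (Fin (m+1) → ℝ) := fun x => φ x • a with hlam
    have hlamsupp : support lam ⊆ tsupport φ := by
      intro x hx
      apply subset_tsupport
      intro h0
      apply hx
      show φ x • a = 0
      rw [h0, zero_smul]
    have hlamts : tsupport lam ⊆ tsupport φ := closure_minimal hlamsupp (isClosed_tsupport φ)
    have hEL := HEL lam ⟨hφ.smul contDiff_const,
      IsCompact.of_isClosed_subset hφs (isClosed_tsupport lam) hlamts,
      hlamts.trans hφsup⟩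
    set Mb : Mat (m+1) := gradW B with hMb
    set vb : Fin (m+1) → ℝ := Matrix.vecMul a Mb with hvb
    have hpt : ∀ x, frob (gradW (h (x ⬝ᵥ ξ) • A + (1 - h (x ⬝ᵥ ξ)) • B)) (jac lam x)
        = fderiv ℝ φ x vb + h (x ⬝ᵥ ξ) * fderiv ℝ φ x vN := by
      intro x
      have hgW : gradW (h (x ⬝ᵥ ξ) • A + (1 - h (x ⬝ᵥ ξ)) • B) = Mb + h (x ⬝ᵥ ξ) • N := by
        rcases hrange (x ⬝ᵥ ξ) with h0 | h0 <;> rw [h0] <;>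
          simp [hMb, hN]
      rw [hgW, frob_add_left, frob_smul_left, hlam,
        frob_jac Mb a φ x (hφd x), frob_jac N a φ x (hφd x), hvb, hvN]
    have hELr : ∫ x in Ω, (fderiv ℝ φ x vb + h (x ⬝ᵥ ξ) * fderiv ℝ φ x vN) = 0 := by
      rw [← hEL]
      exact integral_congr_ae (ae_of_all _ (fun x => (hpt x).symm))
    have hvanish : ∀ x, x ∉ Ω → fderiv ℝ φ x = 0 := by
      intro x hx
      by_contra h0
      exact hx (hφsup (support_fderiv_subset ℝ (mem_support.mpr h0)))
    have hext : ∫ x, (fderiv ℝ φ x vb + h (x ⬝ᵥ ξ) * fderiv ℝ φ x vN) = 0 := by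
      rw [← setIntegral_eq_integral_of_forall_compl_eq_zero (s := Ω)
        (f := fun x => fderiv ℝ φ x vb + h (x ⬝ᵥ ξ) * fderiv ℝ φ x vN)
        (fun x hx => by
          show fderiv ℝ φ x vb + h (x ⬝ᵥ ξ) * fderiv ℝ φ x vN = 0
          rw [hvanish x hx]; simp)]
      exact hELr
    obtain ⟨hcb, hkb⟩ := hfdK φ hφ hφs vb
    obtain ⟨hcN, hkN⟩ := hfdK φ hφ hφs vN
    have hint1 : Integrable (fun x => fderiv ℝ φ x vb) :=
      hcb.integrable_of_hasCompactSupport hkb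
    have hint2 : Integrable (fun x => h (x ⬝ᵥ ξ) * fderiv ℝ φ x vN) :=
      intg hmeas hb1 ξ hcN hkN
    rw [integral_add hint1 hint2] at hext
    have hz1 : ∫ x, fderiv ℝ φ x vb = 0 := by
      have := lemT ξ vb (measurable_const : Measurable (fun _ : ℝ => (1:ℝ)))
        (C := 1) (fun t => by norm_num) hφ hφs (fun s x => rfl)
      simpa using this
    have hw2 : (vN - κ • ξ) ⬝ᵥ ξ = 0 := by
      rw [sub_dotProduct, smul_dotProduct, hξ, hvNξ]; simp
    have hz2 : ∫ x, h (x ⬝ᵥ ξ) * fderiv ℝ φ x (vN - κ • ξ) = 0 := by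
      apply lemT ξ (vN - κ • ξ) hmeas hb1 hφ hφs
      intro s x
      congr 1
      rw [add_dotProduct, smul_dotProduct, hw2]; simp
    obtain ⟨hcw, hkw⟩ := hfdK φ hφ hφs (vN - κ • ξ)
    obtain ⟨hcξ, hkξ⟩ := hfdK φ hφ hφs ξ
    have hsum : ∫ x, h (x ⬝ᵥ ξ) * fderiv ℝ φ x vN
        = (∫ x, h (x ⬝ᵥ ξ) * fderiv ℝ φ x (vN - κ • ξ))
          + κ * ∫ x, h (x ⬝ᵥ ξ) * fderiv ℝ φ x ξ := by
      rw [← integral_const_mul, ← integral_add (intg hmeas hb1 ξ hcw hkw)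
        ((intg hmeas hb1 ξ hcξ hkξ).const_mul κ)]
      congr 1
      funext x
      have hvNdec : vN = (vN - κ • ξ) + κ • ξ := by module
      conv_lhs => rw [hvNdec]
      rw [(fderiv ℝ φ x).map_add, (fderiv ℝ φ x).map_smul, smul_eq_mul]
      ring
    rw [hz1, hsum, hz2, zero_add, zero_add] at hext
    rcases mul_eq_zero.mp hext with h0 | h0
    · exact absurd h0 (ne_of_lt hκ)
    · exact h0
  -- the image interval
  set S : Set ℝ := (fun x : Fin (m+1) → ℝ => x ⬝ᵥ ξ) '' Ω with hSdef
  -- STEP B : reduction to one dimension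
  have hstar : ∀ g : ℝ → ℝ, ContDiff ℝ (⊤:ℕ∞) g → HasCompactSupport g →
      tsupport g ⊆ S → ∫ t, h t * deriv g t = 0 := by
    intro g hg hgs hgsup
    rcases eq_empty_or_nonempty (tsupport g) with hemp | hgne
    · have hg0 : ∀ t, g t = 0 := by
        intro t
        by_contra h0
        have : t ∈ tsupport g := subset_tsupport g h0
        rw [hemp] at this
        exact this
      have : g = fun _ => 0 := funext hg0
      rw [this]
      simp
    have hgd : Differentiable ℝ g := hg.differentiable (by simp)
    set t₁ := sInf (tsupport g) with ht₁
    set t₂ := sSup (tsupport g) with ht₂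
    have ht₁m : t₁ ∈ tsupport g := hgs.sInf_mem hgne
    have ht₂m : t₂ ∈ tsupport g := hgs.sSup_mem hgne
    have ht12 : t₁ ≤ t₂ := csInf_le_csSup hgne hgs.bddBelow hgs.bddAbove
    obtain ⟨x₁, hx₁Ω, hx₁⟩ := hgsup ht₁m
    obtain ⟨x₂, hx₂Ω, hx₂⟩ := hgsup ht₂m
    replace hx₁ : x₁ ⬝ᵥ ξ = t₁ := hx₁
    replace hx₂ : x₂ ⬝ᵥ ξ = t₂ := hx₂
    obtain ⟨d, hd1, hdp⟩ : ∃ d : Fin (m+1) → ℝ, d ⬝ᵥ ξ = 1 ∧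
        ∀ t ∈ Icc t₁ t₂, x₁ + (t - t₁) • d ∈ segment ℝ x₁ x₂ := by
      rcases eq_or_lt_of_le ht12 with heq | hlt
      · refine ⟨ξ, hξ, fun t ht => ?_⟩
        rw [← heq] at ht
        have ht' : t = t₁ := le_antisymm ht.2 ht.1
        rw [ht', sub_self, zero_smul, add_zero]
        exact left_mem_segment ℝ x₁ x₂
      · refine ⟨(t₂ - t₁)⁻¹ • (x₂ - x₁), ?_, ?_⟩
        · rw [smul_dotProduct, sub_dotProduct, hx₁, hx₂, smul_eq_mul,
            inv_mul_eq_div, div_self (by intro h0; rw [sub_eq_zero] at h0; exact absurd h0.symm (ne_of_lt hlt) : t₂ - t₁ ≠ 0)]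
        · intro t ht
          rw [segment_eq_image']
          refine ⟨(t - t₁) / (t₂ - t₁), ⟨?_, ?_⟩, ?_⟩
          · exact div_nonneg (by linarith [ht.1]) (by linarith)
          · rw [div_le_one (by linarith)]; linarith [ht.2]
          · show x₁ + ((t - t₁) / (t₂ - t₁)) • (x₂ - x₁) = _
            rw [smul_smul, div_eq_mul_inv]
    have hsegcomp : IsCompact (segment ℝ x₁ x₂) := by
      rw [segment_eq_image']
      exact isCompact_Icc.image (by continuity)
    have hseg : segment ℝ x₁ x₂ ⊆ Ω := hconv.segment_subset hx₁Ω hx₂Ω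
    obtain ⟨δ, hδ, hthick⟩ := hsegcomp.exists_thickening_subset_open hop hseg
    obtain ⟨Rlin, hRR, hRξ, hRdot⟩ := exists_R ξ hξ
    have hRsingle : Rlin (Pi.single 0 1) = ξ := by
      have := congrArg Rlin hRξ
      rw [hRR] at this
      exact this.symm
    set r : ℝ := δ / (2 * (m + 2)) with hr
    have hrpos : (0:ℝ) < r := by rw [hr]; positivity
    set bump2 : ContDiffBump (0 : Fin m → ℝ) := ⟨r/2, r, by positivity, by linarith⟩
      with hbump2
    set η : (Fin m → ℝ) → ℝ := bump2.normed volume with hη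
    have hηc : ContDiff ℝ (⊤:ℕ∞) η := bump2.contDiff_normed
    have hηs : HasCompactSupport η := bump2.hasCompactSupport_normed
    have hηi : ∫ z, η z = 1 := bump2.integral_normed
    have hηsup : support η ⊆ Metric.ball (0 : Fin m → ℝ) r := by
      rw [hη, bump2.support_normed_eq]
    set tailR : (Fin (m+1) → ℝ) →ₗ[ℝ] (Fin m → ℝ) :=
      LinearMap.pi (fun i : Fin m => (LinearMap.proj i.succ).comp Rlin.toLinearMap) with htailR
    have htailRa : ∀ z i, tailR z i = Rlin z i.succ := fun z i => rfl
    set χ : (Fin (m+1) → ℝ) → ℝ := fun wv => η (tailR wv) with hχ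
    have hχsm : ContDiff ℝ (⊤:ℕ∞) χ := by
      apply hηc.comp
      exact (LinearMap.toContinuousLinearMap tailR).contDiff
    have hχd : Differentiable ℝ χ := hχsm.differentiable (by simp)
    set uCLM : (Fin (m+1) → ℝ) →L[ℝ] (Fin (m+1) → ℝ) :=
      ContinuousLinearMap.id ℝ _ - ℓCLM.smulRight d with huCLMdef
    have huCLMa : ∀ x, uCLM x = x - (x ⬝ᵥ ξ) • d := fun x => rfl
    set uu : (Fin (m+1) → ℝ) → (Fin (m+1) → ℝ) :=
      fun x => x - x₁ - (x ⬝ᵥ ξ - t₁) • d with huu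
    have huueq : uu = fun x => uCLM x + (t₁ • d - x₁) := by
      funext x
      rw [huCLMa]
      show x - x₁ - (x ⬝ᵥ ξ - t₁) • d = x - (x ⬝ᵥ ξ) • d + (t₁ • d - x₁)
      module
    have huud : ∀ x, HasFDerivAt uu uCLM x := by
      intro x
      rw [huueq]
      exact uCLM.hasFDerivAt.add_const _
    have huusm : ContDiff ℝ (⊤:ℕ∞) uu := by
      rw [huueq]
      exact uCLM.contDiff.add contDiff_const
    have huuξ0 : ∀ x, uu x ⬝ᵥ ξ = 0 := by
      intro x
      show (x - x₁ - (x ⬝ᵥ ξ - t₁) • d) ⬝ᵥ ξ = 0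
      rw [sub_dotProduct, sub_dotProduct, smul_dotProduct, hx₁, hd1]
      simp only [smul_eq_mul]
      ring
    set φt : (Fin (m+1) → ℝ) → ℝ := fun x => g (x ⬝ᵥ ξ) * χ (uu x) with hφt
    have hφtsm : ContDiff ℝ (⊤:ℕ∞) φt := by
      apply ContDiff.mul
      · exact hg.comp ℓCLM.contDiff
      · exact hχsm.comp huusm
    -- support estimate
    have hsupp_sub : support φt ⊆ Metric.cthickening (δ/2) (segment ℝ x₁ x₂) := by
      intro x hx
      rw [mem_support] at hx
      have hgx : g (x ⬝ᵥ ξ) ≠ 0 := fun h0 => hx (by rw [hφt]; show g (x ⬝ᵥ ξ) * _ = 0; rw [h0]; ring)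
      have hχx : χ (uu x) ≠ 0 := fun h0 => hx (by rw [hφt]; show g (x ⬝ᵥ ξ) * χ (uu x) = 0; rw [h0]; ring)
      have htmem : x ⬝ᵥ ξ ∈ Icc t₁ t₂ := by
        have h1 : x ⬝ᵥ ξ ∈ tsupport g := subset_tsupport g hgx
        exact ⟨csInf_le hgs.bddBelow h1, le_csSup hgs.bddAbove h1⟩
      have hy0 : Rlin (uu x) 0 = 0 := by
        have h1 : Rlin (uu x) 0 = Rlin (uu x) ⬝ᵥ Pi.single 0 1 := by
          rw [dotProduct_single, mul_one]
        rw [h1, ← hRξ, hRdot]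
        exact huuξ0 x
      have htail : ∀ j : Fin m, |Rlin (uu x) j.succ| < r := by
        intro j
        have h1 : tailR (uu x) ∈ support η := mem_support.mpr (fun h0 => hχx (by rw [hχ]; exact h0))
        have h2 := hηsup h1
        rw [Metric.mem_ball, dist_zero_right] at h2
        calc |Rlin (uu x) j.succ| = ‖tailR (uu x) j‖ := by rw [htailRa]; rfl
          _ ≤ ‖tailR (uu x)‖ := norm_le_pi_norm _ j
          _ < r := h2
      have hycoord : ∀ i : Fin (m+1), |Rlin (uu x) i| ≤ r := by
        intro i
        induction i using Fin.cases with
        | zero => rw [hy0]; simp [le_of_lt hrpos]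
        | succ j => exact le_of_lt (htail j)
      have huubound : ∀ i, |uu x i| ≤ (m+1) * r := by
        intro i
        have h1 : uu x = Rlin (Rlin (uu x)) := (hRR (uu x)).symm
        have hζdef : Rlin (Rlin (Pi.single i 1)) = Pi.single i 1 := hRR _
        have h2 : uu x i = Rlin (uu x) ⬝ᵥ Rlin (Pi.single i 1) := by
          rw [hRdot, dotProduct_single, mul_one]
        have hζsq : Rlin (Pi.single i 1) ⬝ᵥ Rlin (Pi.single i 1) = 1 := by
          rw [hRdot, dotProduct_single]
          simp
        have hζb : ∀ j, |Rlin (Pi.single i 1) j| ≤ 1 := by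
          intro j
          have hs : Rlin (Pi.single i 1) j ^ 2 ≤ ∑ k, Rlin (Pi.single i 1) k ^ 2 :=
            Finset.single_le_sum (f := fun k => Rlin (Pi.single i 1) k ^ 2)
              (fun k _ => sq_nonneg _) (Finset.mem_univ j)
          have hsum : ∑ k, Rlin (Pi.single i 1) k ^ 2 = 1 := by
            conv_rhs => rw [← hζsq]
            unfold dotProduct
            apply Finset.sum_congr rfl
            intro k _
            ring
          rw [hsum] at hs
          nlinarith [abs_nonneg (Rlin (Pi.single i 1) j), sq_abs (Rlin (Pi.single i 1) j)]
        rw [h2]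
        unfold dotProduct
        calc |∑ j, Rlin (uu x) j * Rlin (Pi.single i 1) j|
            ≤ ∑ j, |Rlin (uu x) j * Rlin (Pi.single i 1) j| :=
              Finset.abs_sum_le_sum_abs _ _
          _ ≤ ∑ _j : Fin (m+1), r := by
              apply Finset.sum_le_sum
              intro j _
              rw [abs_mul]
              calc |Rlin (uu x) j| * |Rlin (Pi.single i 1) j| ≤ r * 1 :=
                    mul_le_mul (hycoord j) (hζb j) (abs_nonneg _) (le_of_lt hrpos)
                _ = r := mul_one r
          _ = (m+1) * r := by
              rw [Finset.sum_const, Finset.card_univ, Fintype.card_fin, nsmul_eq_mul]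
              push_cast
              ring
      have hdist : dist x (x₁ + (x ⬝ᵥ ξ - t₁) • d) ≤ δ/2 := by
        rw [dist_eq_norm]
        have hxd : x - (x₁ + (x ⬝ᵥ ξ - t₁) • d) = uu x := by rw [huu]; module
        rw [hxd]
        apply (pi_norm_le_iff_of_nonneg (by positivity)).mpr
        intro i
        calc ‖uu x i‖ = |uu x i| := rfl
          _ ≤ (m+1) * r := huubound i
          _ ≤ δ/2 := by
              rw [hr]
              have hδ0 : (0:ℝ) ≤ δ := le_of_lt hδ
              have hq : ((m:ℝ)+1) * (δ / (2 * ((m:ℝ)+2))) = δ * (((m:ℝ)+1) / (2*((m:ℝ)+2))) := by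
                ring
              push_cast
              rw [hq]
              have hq2 : ((m:ℝ)+1) / (2*((m:ℝ)+2)) ≤ 1/2 := by
                rw [div_le_div_iff₀ (by positivity) (by norm_num)]
                nlinarith [Nat.cast_nonneg (α := ℝ) m]
              calc δ * (((m:ℝ)+1) / (2*((m:ℝ)+2))) ≤ δ * (1/2) :=
                    mul_le_mul_of_nonneg_left hq2 hδ0
                _ = δ/2 := by ring
      exact Metric.mem_cthickening_of_dist_le x _ (δ/2) _ (hdp _ htmem) hdist
    have hφtcpt : HasCompactSupport φt :=
      IsCompact.of_isClosed_subset (hsegcomp.cthickening) (isClosed_tsupport _)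
        (closure_minimal hsupp_sub Metric.isClosed_cthickening)
    have hφtts : tsupport φt ⊆ Ω := by
      apply Subset.trans (closure_minimal hsupp_sub Metric.isClosed_cthickening)
      apply Subset.trans (Metric.cthickening_subset_thickening' hδ (by linarith) _)
      exact hthick
    -- derivative formula
    have hφtfd : ∀ x, HasFDerivAt φt
        ((g (x ⬝ᵥ ξ)) • ((fderiv ℝ χ (uu x)).comp uCLM)
          + (χ (uu x)) • (deriv g (x ⬝ᵥ ξ) • ℓCLM)) x := by
      intro x
      have h1 : HasFDerivAt (fun y : Fin (m+1) → ℝ => g (y ⬝ᵥ ξ))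
          (deriv g (x ⬝ᵥ ξ) • ℓCLM) x :=
        (hgd (x ⬝ᵥ ξ)).hasDerivAt.comp_hasFDerivAt x ℓCLM.hasFDerivAt
      have h2 : HasFDerivAt (fun y => χ (uu y)) ((fderiv ℝ χ (uu x)).comp uCLM) x :=
        (hχd (uu x)).hasFDerivAt.comp x (huud x)
      exact h1.mul h2
    have hw2ξ : (ξ - d) ⬝ᵥ ξ = 0 := by rw [sub_dotProduct, hξ, hd1]; ring
    have hfd_eval : ∀ x, fderiv ℝ φt x ξ - fderiv ℝ φt x (ξ - d)
        = deriv g (x ⬝ᵥ ξ) * χ (uu x) := by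
      intro x
      rw [(hφtfd x).fderiv]
      have e1 : ℓCLM ξ = 1 := hξ
      have e2 : ℓCLM (ξ - d) = 0 := hw2ξ
      have e3 : uCLM ξ = ξ - d := by rw [huCLMa, hξ, one_smul]
      have e4 : uCLM (ξ - d) = ξ - d := by rw [huCLMa, hw2ξ, zero_smul, sub_zero]
      simp only [ContinuousLinearMap.add_apply, ContinuousLinearMap.coe_smul',
        Pi.smul_apply, ContinuousLinearMap.coe_comp', Function.comp_apply, smul_eq_mul,
        e1, e2, e3, e4]
      ring
    have hint_eval := hI0 φt hφtsm hφtcpt hφtts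
    have hlem : ∫ x, h (x ⬝ᵥ ξ) * fderiv ℝ φt x (ξ - d) = 0 := by
      apply lemT ξ (ξ - d) hmeas hb1 hφtsm hφtcpt
      intro s x
      congr 1
      rw [add_dotProduct, smul_dotProduct, hw2ξ]
      simp
    obtain ⟨hc1, hk1⟩ := hfdK φt hφtsm hφtcpt ξ
    obtain ⟨hc2, hk2⟩ := hfdK φt hφtsm hφtcpt (ξ - d)
    have hkey : ∫ x, h (x ⬝ᵥ ξ) * (deriv g (x ⬝ᵥ ξ) * χ (uu x)) = 0 := by
      have heq : (fun x => h (x ⬝ᵥ ξ) * (deriv g (x ⬝ᵥ ξ) * χ (uu x)))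
          = fun x => h (x ⬝ᵥ ξ) * fderiv ℝ φt x ξ
            - h (x ⬝ᵥ ξ) * fderiv ℝ φt x (ξ - d) := by
        funext x
        rw [← hfd_eval x]
        ring
      rw [heq, integral_sub (intg hmeas hb1 ξ hc1 hk1) (intg hmeas hb1 ξ hc2 hk2),
        hint_eval, hlem, sub_zero]
    -- change of variables
    set mv : Fin (m+1) → ℝ := Rlin d - Pi.single 0 1 with hmv
    have hRd0 : Rlin d 0 = 1 := by
      have h1 : Rlin d 0 = Rlin d ⬝ᵥ Pi.single 0 1 := by
        rw [dotProduct_single, mul_one]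
      rw [h1, ← hRξ, hRdot, hd1]
    have hmv0 : mv 0 = 0 := by
      rw [hmv, Pi.sub_apply, hRd0, Pi.single_eq_same]
      ring
    set Meq : (Fin (m+1) → ℝ) ≃ₗ[ℝ] (Fin (m+1) → ℝ) :=
      { toFun := fun y => y + y 0 • mv
        invFun := fun z => z - z 0 • mv
        map_add' := by
          intro y z
          show (y + z) + (y 0 + z 0) • mv = (y + y 0 • mv) + (z + z 0 • mv)
          module
        map_smul' := by
          intro c y
          show (c • y) + (c * y 0) • mv = c • (y + y 0 • mv)
          module
        left_inv := by
          intro y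
          show (y + y 0 • mv) - ((y + y 0 • mv) 0) • mv = y
          have h0 : (y + y 0 • mv) 0 = y 0 := by
            show y 0 + y 0 * mv 0 = y 0
            rw [hmv0]; ring
          rw [h0]
          module
        right_inv := by
          intro z
          show (z - z 0 • mv) + ((z - z 0 • mv) 0) • mv = z
          have h0 : (z - z 0 • mv) 0 = z 0 := by
            show z 0 - z 0 * mv 0 = z 0
            rw [hmv0]; ring
          rw [h0]
          module } with hMeq
    have hMeqa : ∀ y, Meq y = y + y 0 • mv := fun y => rfl
    have hdetM : LinearMap.det (Meq : (Fin (m+1) → ℝ) →ₗ[ℝ] (Fin (m+1) → ℝ)) = 1 := by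
      have hrep : (Meq : (Fin (m+1) → ℝ) →ₗ[ℝ] (Fin (m+1) → ℝ))
          = Matrix.toLin' (1 + Matrix.replicateCol Unit mv * Matrix.replicateRow Unit (Pi.single (0 : Fin (m+1)) (1:ℝ))) := by
        apply LinearMap.ext
        intro y
        rw [Matrix.toLin'_apply]
        have hmulvec : (1 + Matrix.replicateCol Unit mv * Matrix.replicateRow Unit (Pi.single (0 : Fin (m+1)) (1:ℝ))).mulVec y
            = y + y 0 • mv := by
          rw [Matrix.add_mulVec, Matrix.one_mulVec]
          congr 1
          funext i
          show ((Matrix.replicateCol Unit mv * Matrix.replicateRow Unit (Pi.single (0 : Fin (m+1)) (1:ℝ))).mulVec y) i = y 0 * mv i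
          unfold Matrix.mulVec dotProduct
          simp only [Matrix.mul_apply, Matrix.replicateCol_apply, Matrix.replicateRow_apply, Finset.univ_unique,
            Finset.sum_singleton, Finset.sum_mul]
          rw [Finset.sum_eq_single 0]
          · simp [Pi.single_apply]; ring
          · intro b _ hb
            simp [Pi.single_apply, Ne.symm hb]
          · intro hb
            exact absurd (Finset.mem_univ 0) hb
        rw [hmulvec]
        rfl
      rw [hrep, LinearMap.det_toLin', Matrix.det_one_add_replicateCol_mul_replicateRow]
      rw [single_dotProduct, hmv0]
      ring
    have hdetR2 : LinearMap.det (Rlin : (Fin (m+1) → ℝ) →ₗ[ℝ] (Fin (m+1) → ℝ))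
        * LinearMap.det (Rlin : (Fin (m+1) → ℝ) →ₗ[ℝ] (Fin (m+1) → ℝ)) = 1 := by
      have hcomp : (Rlin : (Fin (m+1) → ℝ) →ₗ[ℝ] (Fin (m+1) → ℝ))
          ∘ₗ (Rlin : (Fin (m+1) → ℝ) →ₗ[ℝ] (Fin (m+1) → ℝ)) = LinearMap.id :=
        LinearMap.ext fun z => hRR z
      have := congrArg LinearMap.det hcomp
      rwa [LinearMap.det_comp, LinearMap.det_id] at this
    set L : (Fin (m+1) → ℝ) ≃ₗ[ℝ] (Fin (m+1) → ℝ) := Meq.trans Rlin with hL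
    have hLa : ∀ y, L y = Rlin (y + y 0 • mv) := fun y => rfl
    have hLcoe : (L : (Fin (m+1) → ℝ) →ₗ[ℝ] (Fin (m+1) → ℝ))
        = (Rlin : (Fin (m+1) → ℝ) →ₗ[ℝ] (Fin (m+1) → ℝ))
          ∘ₗ (Meq : (Fin (m+1) → ℝ) →ₗ[ℝ] (Fin (m+1) → ℝ)) := rfl
    have hdetL : |LinearMap.det (L : (Fin (m+1) → ℝ) →ₗ[ℝ] (Fin (m+1) → ℝ))| = 1 := by
      rw [hLcoe, LinearMap.det_comp, hdetM, mul_one]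
      rcases mul_self_eq_one_iff.mp hdetR2 with h0 | h0 <;> rw [h0] <;> norm_num
    set c₀ : Fin (m+1) → ℝ := x₁ - t₁ • d with hc₀
    have hcov := integral_comp_affine c₀ L hdetL
      (fun x => h (x ⬝ᵥ ξ) * (deriv g (x ⬝ᵥ ξ) * χ (uu x)))
    have hRmv : Rlin mv = d - ξ := by
      rw [hmv, _root_.map_sub, hRR, hRsingle]
    have hTpt : ∀ y : Fin (m+1) → ℝ,
        h ((c₀ + L y) ⬝ᵥ ξ) * (deriv g ((c₀ + L y) ⬝ᵥ ξ) * χ (uu (c₀ + L y)))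
        = (h (y 0) * deriv g (y 0)) * η (fun i => y i.succ) := by
      intro y
      have hLy : L y = Rlin y + y 0 • (d - ξ) := by
        rw [hLa, _root_.map_add, _root_.map_smul, hRmv]
      have hRyξ : Rlin y ⬝ᵥ ξ = y 0 := by
        calc Rlin y ⬝ᵥ ξ = Rlin y ⬝ᵥ Rlin (Pi.single 0 1) := by rw [hRsingle]
          _ = y ⬝ᵥ Pi.single 0 1 := hRdot _ _
          _ = y 0 := by rw [dotProduct_single, mul_one]
      have hc0ξ : c₀ ⬝ᵥ ξ = 0 := by
        rw [hc₀, sub_dotProduct, smul_dotProduct, hx₁, hd1]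
        simp
      have hdmξ : (d - ξ) ⬝ᵥ ξ = 0 := by
        rw [sub_dotProduct, hd1, hξ]
        simp
      have hTξ : (c₀ + L y) ⬝ᵥ ξ = y 0 := by
        rw [add_dotProduct, hc0ξ, hLy, add_dotProduct, smul_dotProduct, hdmξ, hRyξ]
        simp
      have hTu : uu (c₀ + L y) = Rlin y - y 0 • ξ := by
        show c₀ + L y - x₁ - ((c₀ + L y) ⬝ᵥ ξ - t₁) • d = Rlin y - y 0 • ξ
        rw [hTξ, hc₀, hLy]
        module
      have hχval : χ (uu (c₀ + L y)) = η (fun i => y i.succ) := by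
        show η (tailR (uu (c₀ + L y))) = η (fun i => y i.succ)
        congr 1
        funext i
        rw [htailRa, hTu, _root_.map_sub, _root_.map_smul, hRR, hRξ]
        rw [Pi.sub_apply, Pi.smul_apply, Pi.single_apply]
        simp [Fin.succ_ne_zero i]
      rw [hTξ, hχval]
      ring
    have hfin : ∫ y : Fin (m+1) → ℝ, (fun t => h t * deriv g t) (y 0)
        * η (fun i => y i.succ) = 0 := by
      have heq2 : (fun y : Fin (m+1) → ℝ => (fun t => h t * deriv g t) (y 0)
          * η (fun i => y i.succ))
          = fun y => h ((c₀ + L y) ⬝ᵥ ξ) * (deriv g ((c₀ + L y) ⬝ᵥ ξ) * χ (uu (c₀ + L y))) := by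
        funext y
        rw [hTpt y]
      rw [heq2, hcov, hkey]
    rw [fub (fun t => h t * deriv g t) η, hηi, mul_one] at hfin
    exact hfin
  -- STEP C : conclude h is a.e. constant on S, contradiction
  have hSne : S.Nonempty := hne.image _
  have hSconv : Convex ℝ S := hconv.linear_image ℓlin
  have hξb : ∀ i, |ξ i| ≤ 1 := by
    intro i
    have h1 : ξ i ^ 2 ≤ ∑ j, ξ j ^ 2 := Finset.single_le_sum (f := fun j => ξ j ^ 2)
      (fun j _ => sq_nonneg _) (Finset.mem_univ i)
    have h2 : ∑ j, ξ j ^ 2 = 1 := by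
      conv_rhs => rw [← hξ]
      unfold dotProduct
      apply Finset.sum_congr rfl
      intro j _
      ring
    nlinarith [abs_nonneg (ξ i), sq_abs (ξ i)]
  obtain ⟨Cb, hCb⟩ := (isBounded_iff_forall_norm_le.mp hbd)
  have hSbd : ∀ t ∈ S, |t| ≤ (m+1) * Cb := by
    rintro t ⟨x, hx, rfl⟩
    calc |x ⬝ᵥ ξ| ≤ ∑ i, |x i * ξ i| := Finset.abs_sum_le_sum_abs _ _
      _ ≤ ∑ _i : Fin (m+1), Cb := by
          apply Finset.sum_le_sum
          intro i _
          rw [abs_mul]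
          calc |x i| * |ξ i| ≤ ‖x‖ * 1 :=
                mul_le_mul (norm_le_pi_norm x i) (hξb i) (abs_nonneg _) (norm_nonneg _)
            _ ≤ Cb := by rw [mul_one]; exact hCb x hx
      _ = (m+1) * Cb := by
          rw [Finset.sum_const, Finset.card_univ, Fintype.card_fin, nsmul_eq_mul]
          push_cast
          ring
  have hSopen : IsOpen S := by
    rw [isOpen_iff_mem_nhds]
    rintro t ⟨x, hxΩ, rfl⟩
    rcases Metric.isOpen_iff.mp hop x hxΩ with ⟨ε, hε, hball⟩
    have hξn : ‖ξ‖ ≤ 1 := (pi_norm_le_iff_of_nonneg zero_le_one).mpr (fun i => hξb i)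
    have hsub : Ioo (x ⬝ᵥ ξ - ε) (x ⬝ᵥ ξ + ε) ⊆ S := by
      intro s hs
      refine ⟨x + (s - x ⬝ᵥ ξ) • ξ, hball ?_, ?_⟩
      · rw [Metric.mem_ball, dist_eq_norm]
        have hd2 : x + (s - x ⬝ᵥ ξ) • ξ - x = (s - x ⬝ᵥ ξ) • ξ := by module
        rw [hd2, norm_smul]
        have hst : |s - x ⬝ᵥ ξ| < ε := by
          rw [abs_lt]
          exact ⟨by linarith [hs.1], by linarith [hs.2]⟩
        calc ‖s - x ⬝ᵥ ξ‖ * ‖ξ‖ ≤ ‖s - x ⬝ᵥ ξ‖ * 1 :=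
              mul_le_mul_of_nonneg_left hξn (norm_nonneg _)
          _ = |s - x ⬝ᵥ ξ| := by rw [mul_one]; rfl
          _ < ε := hst
      · show (x + (s - x ⬝ᵥ ξ) • ξ) ⬝ᵥ ξ = s
        rw [add_dotProduct, smul_dotProduct, hξ]
        simp
    exact mem_nhds_iff.mpr ⟨_, hsub, isOpen_Ioo, by
      constructor <;> simp <;> linarith⟩
  have hbddA : BddAbove S := ⟨(m+1) * Cb, fun t ht => le_trans (le_abs_self t) (hSbd t ht)⟩
  have hbddB : BddBelow S := ⟨-((m+1) * Cb), fun t ht => by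
    have := hSbd t ht
    rw [abs_le] at this
    linarith [this.1]⟩
  have hSIoo : S = Ioo (sInf S) (sSup S) := by
    apply Subset.antisymm
    · intro t ht
      constructor
      · rcases lt_or_eq_of_le (csInf_le hbddB ht) with hlt | heq
        · exact hlt
        · exfalso
          rcases Metric.isOpen_iff.mp hSopen t ht with ⟨ε, hε, hball⟩
          have hmem : t - ε/2 ∈ S := hball (by
            rw [Metric.mem_ball, Real.dist_eq]
            rw [abs_of_nonpos (by linarith)]
            linarith)
          have := csInf_le hbddB hmem
          rw [← heq] at this
          linarith
      · rcases lt_or_eq_of_le (le_csSup hbddA ht) with hlt | heq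
        · exact hlt
        · exfalso
          rcases Metric.isOpen_iff.mp hSopen t ht with ⟨ε, hε, hball⟩
          have hmem : t + ε/2 ∈ S := hball (by
            rw [Metric.mem_ball, Real.dist_eq]
            rw [abs_of_nonneg (by linarith)]
            linarith)
          have := le_csSup hbddA hmem
          rw [heq] at this
          linarith
    · intro t ht
      obtain ⟨s1, hs1S, hs1⟩ := exists_lt_of_csInf_lt hSne ht.1
      obtain ⟨s2, hs2S, hs2⟩ := exists_lt_of_lt_csSup hSne ht.2
      exact hSconv.ordConnected.out hs1S hs2S ⟨le_of_lt hs1, le_of_lt hs2⟩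
  have hαβ : sInf S < sSup S := by
    obtain ⟨t, ht⟩ := hSne
    have := hSIoo ▸ ht
    exact lt_trans this.1 this.2
  obtain ⟨c, hcae⟩ := dbr hαβ hmeas hb1 (by rw [← hSIoo]; exact hstar)
  exact hnc ⟨c, by rw [hSIoo]; exact hcae⟩
end
end

section
/- Let W(X) = |X|² + |X⁻¹|²·|det(X)|, defined and differentiable on GL(2,ℝ), with energy-momentum tensor T(X) = Xᵀ∇W(X) − W(X)·I. Then for every real α > 0 and every R ∈ O(2), T(√α·R) = −2·I. In particular the energy-momentum mapping X ↦ T(X) is not injective on GL(2,ℝ). -/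
open MeasureTheory Matrix

attribute [local instance] Matrix.normedAddCommGroup Matrix.normedSpace

noncomputable section

/-- The density `W(X) = |X|² + |X⁻¹|² |det X|` on `GL(2,ℝ)`. -/
noncomputable def W16 (X : Mat 2) : ℝ :=
  (Xᵀ * X).trace + ((X⁻¹)ᵀ * X⁻¹).trace * |X.det|


lemma frob_entries (G H : Mat 2) :
    frob G H = G 0 0 * H 0 0 + G 0 1 * H 0 1 + G 1 0 * H 1 0 + G 1 1 * H 1 1 := by
  simp [frob, Matrix.trace_fin_two, Matrix.mul_apply, Fin.sum_univ_two, Matrix.transpose_apply]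
  ring

lemma frob_cancel {G G' : Mat 2} (h : ∀ H, frob G H = frob G' H) : G = G' := by
  ext i j
  fin_cases i <;> fin_cases j
  · have := h !![1,0;0,0]; simp [frob_entries] at this; simpa using this
  · have := h !![0,1;0,0]; simp [frob_entries] at this; simpa using this
  · have := h !![0,0;1,0]; simp [frob_entries] at this; simpa using this
  · have := h !![0,0;0,1]; simp [frob_entries] at this; simpa using this

lemma W16_eq (Y : Mat 2) (hd : Y.det ≠ 0) :
    W16 Y = (Yᵀ * Y).trace * (1 + 1 / |Y.det|) := by
  have habs : |Y.det| ≠ 0 := abs_ne_zero.mpr hd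
  have h1 : ((Y⁻¹)ᵀ * Y⁻¹).trace = (Yᵀ * Y).trace / (Y.det) ^ 2 := by
    rw [Matrix.inv_def]
    simp only [Matrix.adjugate_fin_two, Matrix.trace_fin_two, Matrix.mul_apply,
      Fin.sum_univ_two, Matrix.transpose_apply, Matrix.smul_apply, smul_eq_mul,
      Ring.inverse_eq_inv', Matrix.cons_val', Matrix.cons_val_zero, Matrix.cons_val_one,
      Matrix.head_cons, Matrix.head_fin_const, Matrix.empty_val', Matrix.cons_val_fin_one,
      Matrix.of_apply]
    field_simp
    ring
  rw [W16, h1, ← sq_abs Y.det]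
  field_simp

lemma p_poly (X H : Mat 2) (t : ℝ) :
    ((X + t • H)ᵀ * (X + t • H)).trace
      = (Xᵀ * X).trace + (2 * frob X H) * t + (Hᵀ * H).trace * t ^ 2 := by
  simp [frob, Matrix.trace_fin_two, Matrix.mul_apply, Fin.sum_univ_two,
    Matrix.transpose_apply, Matrix.add_apply, Matrix.smul_apply, smul_eq_mul]
  ring

lemma d_poly (X H : Mat 2) (t : ℝ) :
    (X + t • H).det = X.det + (X.adjugate * H).trace * t + H.det * t ^ 2 := by
  simp [Matrix.det_fin_two, Matrix.adjugate_fin_two, Matrix.trace_fin_two, Matrix.mul_apply,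
    Matrix.vecMul, dotProduct, Fin.sum_univ_two, Matrix.add_apply, Matrix.smul_apply,
    smul_eq_mul]
  ring

lemma calc_helper (c0 c1 c2 d0 d1 d2 : ℝ) (hd : d0 ≠ 0) (f : ℝ → ℝ)
    (hf : ∀ t : ℝ, d0 + d1 * t + d2 * t ^ 2 ≠ 0 →
      f t = (c0 + c1 * t + c2 * t ^ 2) * (1 + 1 / |d0 + d1 * t + d2 * t ^ 2|)) :
    HasDerivAt f (c1 * (1 + 1 / |d0|) - c0 * d1 / (d0 * |d0|)) 0 := by
  have hp : HasDerivAt (fun t : ℝ => c0 + c1 * t + c2 * t ^ 2) c1 0 := by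
    have h1 : HasDerivAt (fun t : ℝ => c1 * t) c1 0 := by
      simpa using (hasDerivAt_id (0 : ℝ)).const_mul c1
    have h2 : HasDerivAt (fun t : ℝ => c2 * t ^ 2) 0 0 := by
      simpa using (hasDerivAt_pow 2 (0 : ℝ)).const_mul c2
    exact (((hasDerivAt_const (0:ℝ) c0).add h1).add h2).congr_deriv (by ring)
  have hδ : HasDerivAt (fun t : ℝ => d0 + d1 * t + d2 * t ^ 2) d1 0 := by
    have h1 : HasDerivAt (fun t : ℝ => d1 * t) d1 0 := by
      simpa using (hasDerivAt_id (0 : ℝ)).const_mul d1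
    have h2 : HasDerivAt (fun t : ℝ => d2 * t ^ 2) 0 0 := by
      simpa using (hasDerivAt_pow 2 (0 : ℝ)).const_mul d2
    exact (((hasDerivAt_const (0:ℝ) d0).add h1).add h2).congr_deriv (by ring)
  have hδne : (fun t : ℝ => d0 + d1 * t + d2 * t ^ 2) 0 ≠ 0 := by simpa using hd
  have hinv : HasDerivAt (fun t : ℝ => (d0 + d1 * t + d2 * t ^ 2)⁻¹) (-d1 / d0 ^ 2) 0 := by
    have := hδ.inv hδne
    exact this.congr_deriv (by simp)
  have hcont : ContinuousAt (fun t : ℝ => d0 + d1 * t + d2 * t ^ 2) 0 := hδ.continuousAt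
  rcases hd.lt_or_gt with hneg | hpos
  · have hev : ∀ᶠ t : ℝ in nhds 0, d0 + d1 * t + d2 * t ^ 2 < 0 := by
      have h : Set.Iio (0:ℝ) ∈ nhds ((fun t : ℝ => d0 + d1 * t + d2 * t ^ 2) 0) := by
        simpa using Iio_mem_nhds hneg
      exact hcont h
    have heq : f =ᶠ[nhds 0] fun t : ℝ =>
        (c0 + c1 * t + c2 * t ^ 2) * (1 - (d0 + d1 * t + d2 * t ^ 2)⁻¹) := by
      filter_upwards [hev] with t ht
      rw [hf t (ne_of_lt ht), abs_of_neg ht, one_div, inv_neg]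
      ring
    have hg : HasDerivAt
        (fun t : ℝ => (c0 + c1 * t + c2 * t ^ 2) * (1 - (d0 + d1 * t + d2 * t ^ 2)⁻¹))
        (c1 * (1 - d0⁻¹) + c0 * (d1 / d0 ^ 2)) 0 := by
      have h := hp.mul ((hasDerivAt_const (0:ℝ) (1:ℝ)).sub hinv)
      refine h.congr_deriv ?_
      simp
      ring
    refine HasDerivAt.congr_of_eventuallyEq ?_ heq
    refine hg.congr_deriv ?_
    rw [abs_of_neg hneg]
    ring
  · have hev : ∀ᶠ t : ℝ in nhds 0, 0 < d0 + d1 * t + d2 * t ^ 2 := by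
      have h : Set.Ioi (0:ℝ) ∈ nhds ((fun t : ℝ => d0 + d1 * t + d2 * t ^ 2) 0) := by
        simpa using Ioi_mem_nhds hpos
      exact hcont h
    have heq : f =ᶠ[nhds 0] fun t : ℝ =>
        (c0 + c1 * t + c2 * t ^ 2) * (1 + (d0 + d1 * t + d2 * t ^ 2)⁻¹) := by
      filter_upwards [hev] with t ht
      rw [hf t (ne_of_gt ht), abs_of_pos ht, one_div]
    have hg : HasDerivAt
        (fun t : ℝ => (c0 + c1 * t + c2 * t ^ 2) * (1 + (d0 + d1 * t + d2 * t ^ 2)⁻¹))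
        (c1 * (1 + d0⁻¹) + c0 * (-d1 / d0 ^ 2)) 0 := by
      have h := hp.mul ((hasDerivAt_const (0:ℝ) (1:ℝ)).add hinv)
      refine h.congr_deriv ?_
      simp
    refine HasDerivAt.congr_of_eventuallyEq ?_ heq
    refine hg.congr_deriv ?_
    rw [abs_of_pos hpos]
    ring

lemma key (X H : Mat 2) (hd : X.det ≠ 0) :
    HasDerivAt (fun t : ℝ => W16 (X + t • H))
      (2 * frob X H * (1 + 1 / |X.det|)
        - (Xᵀ * X).trace * (X.adjugate * H).trace / (X.det * |X.det|)) 0 := by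
  refine calc_helper (Xᵀ * X).trace (2 * frob X H) (Hᵀ * H).trace
      X.det (X.adjugate * H).trace H.det hd _ ?_
  intro t ht
  have hdet : (X + t • H).det ≠ 0 := by rw [d_poly]; exact ht
  rw [W16_eq _ hdet, p_poly, d_poly]

/-- for `W(X) = |X|² + |X⁻¹|²|det X|` on `GL(2,ℝ)`, one has
`T(√α · R) = −2I` for every `α > 0` and `R ∈ O(2)`; in particular the energy-momentum
mapping is not injective on `GL(2,ℝ)`. -/
theorem stmt_16 (gradW : Mat 2 → Mat 2)
    (hgrad : ∀ X : Mat 2, X.det ≠ 0 →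
      ∀ H : Mat 2, HasDerivAt (fun t : ℝ => W16 (X + t • H)) (frob (gradW X) H) 0) :
    (∀ α : ℝ, 0 < α → ∀ R ∈ On 2,
      EMT W16 gradW (Real.sqrt α • R) = (-2 : ℝ) • (1 : Mat 2)) ∧
    ¬ Set.InjOn (EMT W16 gradW) {X : Mat 2 | X.det ≠ 0} := by
  have hfs : ∀ (c : ℝ) (A B : Mat 2), frob (c • A) B = c * frob A B := by
    intro c A B
    simp [frob, Matrix.transpose_smul, Matrix.smul_mul, Matrix.trace_smul, smul_eq_mul]
  have main : ∀ α : ℝ, 0 < α → ∀ R ∈ On 2,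
      EMT W16 gradW (Real.sqrt α • R) = (-2 : ℝ) • (1 : Mat 2) := by
    intro α hα R hR
    have hR' : Rᵀ * R = 1 := hR
    set s : ℝ := Real.sqrt α with hs
    have hs2 : s * s = α := Real.mul_self_sqrt hα.le
    have hspos : 0 < s := Real.sqrt_pos.mpr hα
    set X0 : Mat 2 := s • R with hX0
    have hdetR : R.det * R.det = 1 := by
      have := congrArg Matrix.det hR'
      simpa [Matrix.det_mul, Matrix.det_transpose] using this
    have hdetRne : R.det ≠ 0 := by
      intro h; rw [h] at hdetR; simp at hdetR
    have hdetX0 : X0.det = α * R.det := by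
      rw [hX0, Matrix.det_smul]
      simp only [Fintype.card_fin]
      rw [pow_two, hs2]
    have habsR : |R.det| = 1 := by
      rcases mul_self_eq_one_iff.mp hdetR with h | h <;> simp [h]
    have habs : |X0.det| = α := by
      rw [hdetX0, abs_mul, habsR, abs_of_pos hα, mul_one]
    have hdet : X0.det ≠ 0 := by
      rw [hdetX0]; exact mul_ne_zero hα.ne' hdetRne
    have hXtX : X0ᵀ * X0 = α • (1 : Mat 2) := by
      rw [hX0, Matrix.transpose_smul, Matrix.smul_mul, Matrix.mul_smul, smul_smul, hs2, hR']
    have htr : (X0ᵀ * X0).trace = 2 * α := by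
      rw [hXtX]
      simp [Matrix.trace_smul, Matrix.trace_one, smul_eq_mul]
      ring
    have hRRt : R * Rᵀ = 1 := mul_eq_one_comm.mp hR'
    have hXXt : X0 * X0ᵀ = α • (1 : Mat 2) := by
      rw [hX0, Matrix.transpose_smul, Matrix.smul_mul, Matrix.mul_smul, smul_smul, hs2, hRRt]
    have hinvX0 : X0⁻¹ = α⁻¹ • X0ᵀ := by
      refine Matrix.inv_eq_right_inv ?_
      rw [Matrix.mul_smul, hXXt, smul_smul, inv_mul_cancel₀ hα.ne', one_smul]
    have hadj : X0.adjugate = X0.det • X0⁻¹ := by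
      rw [Matrix.inv_def, Ring.inverse_eq_inv', smul_smul, mul_inv_cancel₀ hdet, one_smul]
    have hadjH : ∀ H : Mat 2, (X0.adjugate * H).trace = R.det * (s * frob R H) := by
      intro H
      rw [hadj, hinvX0, Matrix.smul_mul, Matrix.smul_mul, Matrix.trace_smul, Matrix.trace_smul]
      have : (X0ᵀ * H).trace = frob X0 H := rfl
      rw [this, hX0, hfs, hdetX0]
      simp only [smul_eq_mul]
      field_simp
    have hfX0 : ∀ H : Mat 2, frob X0 H = s * frob R H := fun H => by rw [hX0, hfs]
    have hgradeq : gradW X0 = (2 * s) • R := by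
      apply frob_cancel
      intro H
      have h1 := hgrad X0 hdet H
      have h2 := key X0 H hdet
      have hval := h1.unique h2
      rw [hval, htr, habs, hadjH, hdetX0, hfs, hfs, ← hs2]
      field_simp
      ring
    have hW : W16 X0 = 2 * α + 2 := by
      rw [W16_eq X0 hdet, htr, habs]
      field_simp
    rw [EMT, hgradeq, hW, hX0, Matrix.transpose_smul, Matrix.smul_mul, Matrix.mul_smul,
      smul_smul, hR', ← sub_smul]
    congr 1
    rw [← hs2]
    ring
  refine ⟨main, ?_⟩
  intro hinj
  have hone : (1 : Mat 2) ∈ On 2 := by simp [On]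
  have hnegone : (-1 : Mat 2) ∈ On 2 := by
    simp [On, Matrix.transpose_neg, Matrix.transpose_one]
  have h1 := main 1 one_pos 1 hone
  have h2 := main 1 one_pos (-1) hnegone
  rw [Real.sqrt_one, one_smul] at h1 h2
  have hm1 : (1 : Mat 2) ∈ {X : Mat 2 | X.det ≠ 0} := by simp
  have hm2 : (-1 : Mat 2) ∈ {X : Mat 2 | X.det ≠ 0} := by
    simp [Matrix.det_neg]
  have heq : (1 : Mat 2) = -1 := hinj hm1 hm2 (h1.trans h2.symm)
  have := congrArg (fun M : Mat 2 => M 0 0) heq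
  simp [Matrix.one_apply] at this
  norm_num at this
end
end
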